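/- Let G be a bidirected tree with seed set S and boost set B, and assume that every non-seed node is activated with probability strictly less than one (ap_B(w) < 1 for all w ∉ S). Then for every non-seed node u and every two distinct neighbors v, w of u, one has ∏_{x ∈ N(u) \ {v, w}} (1 − ap_B(x\u) · p^B_{xu}) = (1 − ap_B(u\v)) / (1 − ap_B(w\u) · p^B_{wu}). -/

import Mathlib

open Finset
open scoped Classical

noncomputable section

variable {V : Type*}

/-- The probability weight of the live-edge configuration `L ⊆ E`:
each edge `e ∈ E` is independently live with probability `p e`. -/
def edgeWeight [DecidableEq V] (E : Finset (V × V)) (p : V × V → ℝ)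
    (L : Finset (V × V)) : ℝ :=
  (∏ e ∈ L, p e) * ∏ e ∈ E \ L, (1 - p e)

/-- `v` is activated in configuration `L`: it is reachable from some seed in `S`
through live (directed) edges. -/
def Reaches (L : Finset (V × V)) (S : Finset V) (v : V) : Prop :=
  ∃ s ∈ S, Relation.ReflTransGen (fun a b => (a, b) ∈ L) s v

/-- Activation probability of node `v` under the live-edge model with edge set `E`,
edge probabilities `p`, and seed set `S`. -/
def ap [Fintype V] [DecidableEq V] (E : Finset (V × V)) (p : V × V → ℝ)
    (S : Finset V) (v : V) : ℝ :=
  ∑ L ∈ E.powerset, edgeWeight E p L * (if Reaches L S v then 1 else 0)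

/-- Expected number of activated nodes lying in the node set `W`. -/
def spreadOn [Fintype V] [DecidableEq V] (E : Finset (V × V)) (p : V × V → ℝ)
    (S W : Finset V) : ℝ :=
  ∑ L ∈ E.powerset, edgeWeight E p L * ((W.filter (fun v => Reaches L S v)).card : ℝ)

/-- The influence spread `σ_S`: expected total number of activated nodes. -/
def spread [Fintype V] [DecidableEq V] (E : Finset (V × V)) (p : V × V → ℝ)
    (S : Finset V) : ℝ :=
  spreadOn E p S Finset.univ

/-- Boosted edge probabilities: edges pointing into a boosted node use `p'`. -/
def pB (p p' : V × V → ℝ) (B : Finset V) : V × V → ℝ :=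
  fun e => if e.2 ∈ B then p' e else p e

/-- The bidirected edge set of an undirected graph: each undirected edge is
replaced by the two directed edges. -/
def treeEdges [Fintype V] [DecidableEq V] (T : SimpleGraph V) [DecidableRel T.Adj] :
    Finset (V × V) :=
  Finset.univ.filter (fun e => T.Adj e.1 e.2)

/-- `apSub E p S v u` is `ap_B(v\u)`: the activation probability of `v` in the
subtree `G_{v\u}` obtained by removing the directed edges `(u,v)` and `(v,u)`. -/
def apSub [Fintype V] [DecidableEq V] (E : Finset (V × V)) (p : V × V → ℝ)
    (S : Finset V) (v u : V) : ℝ :=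
  ap (E \ {(u, v), (v, u)}) p S v

/-- The set of nodes of the connected component containing `v` w.r.t. edge set `E`. -/
def comp [Fintype V] [DecidableEq V] (E : Finset (V × V)) (v : V) : Finset V :=
  Finset.univ.filter (fun w => Relation.ReflTransGen (fun a b => (a, b) ∈ E) v w)

/-- `gain E p S v u` is `g_B(v\u)`: in the subtree `G_{v\u}`, the expected number of
activated nodes when the seed set is `(S ∩ V(G_{v\u})) ∪ {v}` minus the expected
number when the seed set is `S ∩ V(G_{v\u})`. -/
def gain [Fintype V] [DecidableEq V] (E : Finset (V × V)) (p : V × V → ℝ)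
    (S : Finset V) (v u : V) : ℝ :=
  spreadOn (E \ {(u, v), (v, u)}) p (insert v (S ∩ comp (E \ {(u, v), (v, u)}) v))
      (comp (E \ {(u, v), (v, u)}) v)
    - spreadOn (E \ {(u, v), (v, u)}) p (S ∩ comp (E \ {(u, v), (v, u)}) v)
      (comp (E \ {(u, v), (v, u)}) v)

/-!
At a non-seed node `u` of a tree, `u` is activated exactly when some neighbour `x` is activated
inside its branch `G_{x\u}` and the edge `(x, u)` is live. The branches at `u` have pairwise
disjoint edge sets, so these events are independent and
`1 - ap_B(u) = ∏_{x ∈ N(u)} (1 - ap_B(x\u) p^B_{xu})`.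
Removing the edges between `u` and `v` is the same as giving them probability zero, which turns
the factor of `v` into `1`; hence `1 - ap_B(u\v)` is the same product over `N(u) \ {v}`.
Since `ap_B(u) < 1`, no factor vanishes, and dividing by the factor of `w` gives the claim.
-/

section LiveEdge

variable {α : Type*} [DecidableEq α]

theorem sum_powerset_union {M : Type*} [AddCommMonoid M] {E₁ E₂ : Finset α} (hd : Disjoint E₁ E₂)
    (F : Finset α → M) :
    ∑ L ∈ (E₁ ∪ E₂).powerset, F L = ∑ L₁ ∈ E₁.powerset, ∑ L₂ ∈ E₂.powerset, F (L₁ ∪ L₂) := by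
  rw [← Finset.sum_product']
  refine Finset.sum_nbij' (fun L => (L ∩ E₁, L ∩ E₂)) (fun P => P.1 ∪ P.2) ?_ ?_ ?_ ?_ ?_ <;>
    simp only [mem_product, mem_powerset, Prod.forall]
  · exact fun L _ => ⟨inter_subset_right, inter_subset_right⟩
  · exact fun L₁ L₂ h => union_subset_union h.1 h.2
  · exact fun L hL => by rw [← inter_union_distrib_left, inter_eq_left.2 hL]
  · intro L₁ L₂ h
    ext e <;> grind [disjoint_left]
  · exact fun L hL => by rw [← inter_union_distrib_left, inter_eq_left.2 hL]

variable [DecidableEq V] (q : V × V → ℝ)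

theorem sum_edgeWeight (E : Finset (V × V)) : ∑ L ∈ E.powerset, edgeWeight E q L = 1 := by
  simp [edgeWeight, ← prod_add]

theorem edgeWeight_union {E₁ E₂ L₁ L₂ : Finset (V × V)} (hd : Disjoint E₁ E₂) (h₁ : L₁ ⊆ E₁)
    (h₂ : L₂ ⊆ E₂) :
    edgeWeight (E₁ ∪ E₂) q (L₁ ∪ L₂) = edgeWeight E₁ q L₁ * edgeWeight E₂ q L₂ := by
  have hsdiff : (E₁ ∪ E₂) \ (L₁ ∪ L₂) = (E₁ \ L₁) ∪ (E₂ \ L₂) := by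
    ext e; grind [disjoint_left]
  rw [edgeWeight, edgeWeight, edgeWeight, prod_union (hd.mono h₁ h₂), hsdiff,
    prod_union (hd.mono sdiff_subset sdiff_subset)]
  ring

theorem sum_edgeWeight_mul_mul {E₁ E₂ : Finset (V × V)} (hd : Disjoint E₁ E₂)
    (f g : Finset (V × V) → ℝ) :
    ∑ L ∈ (E₁ ∪ E₂).powerset, edgeWeight (E₁ ∪ E₂) q L * (f (L ∩ E₁) * g (L ∩ E₂)) =
      (∑ L ∈ E₁.powerset, edgeWeight E₁ q L * f L) *
        ∑ L ∈ E₂.powerset, edgeWeight E₂ q L * g L := by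
  rw [sum_powerset_union hd, sum_mul_sum]
  refine sum_congr rfl fun L₁ h₁ => sum_congr rfl fun L₂ h₂ => ?_
  rw [mem_powerset] at h₁ h₂
  have hL₁ : (L₁ ∪ L₂) ∩ E₁ = L₁ := by ext e; grind [disjoint_left]
  have hL₂ : (L₁ ∪ L₂) ∩ E₂ = L₂ := by ext e; grind [disjoint_left]
  rw [edgeWeight_union q hd h₁ h₂, hL₁, hL₂]
  ring

theorem sum_edgeWeight_insert_mul {e : V × V} {E : Finset (V × V)} (he : e ∉ E)
    (f : Finset (V × V) → ℝ) :
    ∑ L ∈ (insert e E).powerset,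
        edgeWeight (insert e E) q L * ((if e ∈ L then 1 else 0) * f (L ∩ E)) =
      q e * ∑ L ∈ E.powerset, edgeWeight E q L * f L := by
  have key := sum_edgeWeight_mul_mul q (disjoint_singleton_left.2 he)
    (fun L => if e ∈ L then 1 else 0) f
  have hsingle : ∑ L ∈ ({e} : Finset (V × V)).powerset,
      edgeWeight {e} q L * (if e ∈ L then 1 else 0) = q e := by
    rw [show ({e} : Finset (V × V)) = insert e ∅ from rfl, sum_powerset_insert (notMem_empty e)]
    simp [edgeWeight]
  rw [← insert_eq, hsingle] at key
  rw [← key]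
  refine sum_congr rfl fun L _ => ?_
  simp

theorem sum_edgeWeight_mul_inter {E E₀ : Finset (V × V)} (h : E₀ ⊆ E) (f : Finset (V × V) → ℝ) :
    ∑ L ∈ E.powerset, edgeWeight E q L * f (L ∩ E₀) =
      ∑ L ∈ E₀.powerset, edgeWeight E₀ q L * f L := by
  have key := sum_edgeWeight_mul_mul q (disjoint_sdiff (s := E₀) (t := E)) f 1
  simpa [union_sdiff_of_subset h, sum_edgeWeight] using key

theorem sum_edgeWeight_mul_prod {E : Finset (V × V)} {ι : Type*} (D : ι → Finset (V × V)) (f : ι → Finset (V × V) → ℝ)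
    (s : Finset ι) (hD : (s : Set ι).PairwiseDisjoint D) (hE : ∀ i ∈ s, D i ⊆ E) :
    ∑ L ∈ E.powerset, edgeWeight E q L * ∏ i ∈ s, f i (L ∩ D i) =
      ∏ i ∈ s, ∑ L ∈ (D i).powerset, edgeWeight (D i) q L * f i L := by
  induction s using Finset.induction_on generalizing E with
  | empty => simp [sum_edgeWeight]
  | insert a s ha ih =>
    rw [coe_insert, Set.pairwiseDisjoint_insert] at hD
    have hsub : ∀ i ∈ s, D i ⊆ E \ D a := fun i hi =>
      subset_sdiff.2 ⟨hE i (mem_insert_of_mem hi),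
        (hD.2 i hi fun h => ha (h ▸ hi)).symm⟩
    rw [prod_insert ha, ← ih hD.1 hsub, ← sum_edgeWeight_mul_mul q disjoint_sdiff,
      union_sdiff_of_subset (hE a (mem_insert_self a s))]
    refine sum_congr rfl fun L hL => ?_
    rw [prod_insert ha]
    congr 2
    refine prod_congr rfl fun i hi => ?_
    rw [inter_assoc, inter_eq_right.2 (hsub i hi)]

end LiveEdge

section ActivationProbability

variable [Fintype V] [DecidableEq V]

theorem ap_congr {E : Finset (V × V)} {q q' : V × V → ℝ} (h : ∀ e ∈ E, q e = q' e)
    (S : Finset V) (v : V) : ap E q S v = ap E q' S v := by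
  refine sum_congr rfl fun L hL => ?_
  have hlive : ∏ e ∈ L, q e = ∏ e ∈ L, q' e :=
    prod_congr rfl fun e he => h e (mem_powerset.1 hL he)
  have hdead : ∏ e ∈ E \ L, (1 - q e) = ∏ e ∈ E \ L, (1 - q' e) :=
    prod_congr rfl fun e he => by rw [h e (mem_sdiff.1 he).1]
  rw [edgeWeight, edgeWeight, hlive, hdead]

theorem ap_sdiff (E R : Finset (V × V)) (q : V × V → ℝ) (S : Finset V) (v : V) :
    ap (E \ R) q S v = ap E (fun e => if e ∈ R then 0 else q e) S v := by
  set q' : V × V → ℝ := fun e => if e ∈ R then 0 else q e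
  have hweight : ∀ L ⊆ E \ R, edgeWeight (E \ R) q L = edgeWeight E q' L := by
    intro L hL
    have hlive : ∏ e ∈ L, q e = ∏ e ∈ L, q' e :=
      prod_congr rfl fun e he => (if_neg (mem_sdiff.1 (hL he)).2).symm
    have hdead : ∏ e ∈ (E \ R) \ L, (1 - q e) = ∏ e ∈ E \ L, (1 - q' e) := by
      refine (prod_congr rfl fun e he => ?_).trans
        (prod_subset (sdiff_subset_sdiff sdiff_subset subset_rfl) fun e he he' => ?_)
      · simp [q', (mem_sdiff.1 (mem_sdiff.1 he).1).2]
      · have : e ∈ R := by simp_all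
        simp [q', this]
    rw [edgeWeight, edgeWeight, hlive, hdead]
  calc ap (E \ R) q S v
      = ∑ L ∈ (E \ R).powerset, edgeWeight E q' L * if Reaches L S v then 1 else 0 :=
        sum_congr rfl fun L hL => by rw [hweight L (mem_powerset.1 hL)]
    _ = ap E q' S v := by
        refine sum_subset (powerset_mono.2 sdiff_subset) fun L hLE hLR => ?_
        obtain ⟨e, heL, heR⟩ : ∃ e ∈ L, e ∈ R := by
          by_contra! h
          exact hLR (mem_powerset.2 fun e he => mem_sdiff.2 ⟨mem_powerset.1 hLE he, h e he⟩)
        rw [edgeWeight, prod_eq_zero (f := q') heL (if_pos heR), zero_mul, zero_mul]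

end ActivationProbability

theorem Relation.ReflTransGen.exists_avoiding_of_ne {α : Type*} {r : α → α → Prop} {s u : α}
    (h : ReflTransGen r s u) (hs : s ≠ u) :
    ∃ c, ReflTransGen (fun a b => r a b ∧ a ≠ u ∧ b ≠ u) s c ∧ r c u := by
  induction h using Relation.ReflTransGen.head_induction_on with
  | refl => exact absurd rfl hs
  | @head a b hab _ ih =>
    by_cases hb : b = u
    · exact ⟨a, .refl, hb ▸ hab⟩
    · obtain ⟨c, hbc, hcu⟩ := ih hb
      exact ⟨c, .head ⟨hab, hs, hb⟩ hbc, hcu⟩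

section Branch

open SimpleGraph Relation

variable [Fintype V] [DecidableEq V] (T : SimpleGraph V) [DecidableRel T.Adj]

/-- The vertex set of the subtree `G_{x\u}`. -/
def branch (x u : V) : Finset V :=
  univ.filter fun z => (T.deleteEdges {s(x, u)}).Reachable z x

def branchEdges (x u : V) : Finset (V × V) :=
  (treeEdges T).filter fun e => e.1 ∈ branch T x u ∧ e.2 ∈ branch T x u

variable {T}

theorem mem_treeEdges {a b : V} : (a, b) ∈ treeEdges T ↔ T.Adj a b := by
  simp [treeEdges]

theorem mem_branch_self (x u : V) : x ∈ branch T x u := by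
  simp [branch]

theorem notMem_branch (hT : T.IsAcyclic) {x u : V} (h : T.Adj x u) : u ∉ branch T x u := by
  simpa [branch, reachable_comm] using isBridge_iff.1 (isAcyclic_iff_forall_adj_isBridge.1 hT h)

theorem mem_branch_of_reflTransGen {x u s t : V} {r : V → V → Prop}
    (hr : ∀ a b, r a b → (T.deleteEdges {s(x, u)}).Adj a b) (h : ReflTransGen r s t)
    (ht : t ∈ branch T x u) : s ∈ branch T x u := by
  simp only [branch, mem_filter, mem_univ, true_and] at ht ⊢
  exact ((reachable_iff_reflTransGen _ _).2 (ReflTransGen.mono hr _ _ h)).trans ht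

theorem reflTransGen_and_mem_branchEdges {x u s t : V} {r : V → V → Prop}
    (hr : ∀ a b, r a b → (T.deleteEdges {s(x, u)}).Adj a b) (h : ReflTransGen r s t)
    (ht : t ∈ branch T x u) :
    ReflTransGen (fun a b => r a b ∧ (a, b) ∈ branchEdges T x u) s t := by
  induction h using Relation.ReflTransGen.head_induction_on with
  | refl => exact .refl
  | @head a b hab hbt ih =>
    have hb := mem_branch_of_reflTransGen hr hbt ht
    have ha := mem_branch_of_reflTransGen hr (.single hab) hb
    have hadj : T.Adj a b := ((deleteEdges_adj ..).1 (hr a b hab)).1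
    exact .head ⟨hab, mem_filter.2 ⟨mem_treeEdges.2 hadj, ha, hb⟩⟩ ih

theorem disjoint_branch (hT : T.IsAcyclic) {u x y : V} (hx : T.Adj x u) (hy : T.Adj y u)
    (hxy : x ≠ y) : Disjoint (branch T x u) (branch T y u) := by
  -- A walk from `z` to `y` avoiding `{y, u}` cannot visit `u`, so it also avoids `{x, u}`;
  -- then `u - y - z - x` would join `u` to `x` without the bridge `{x, u}`.
  refine disjoint_left.2 fun z hzx hzy => notMem_branch hT hx ?_
  simp only [branch, mem_filter, mem_univ, true_and] at hzx hzy ⊢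
  obtain ⟨W, hW⟩ := reachable_deleteEdges_iff_exists_walk.1 hzy
  have hu : u ∉ W.support := fun hu => notMem_branch hT hy <| by
    simpa [branch] using reachable_deleteEdges_iff_exists_walk.2
      ⟨W.dropUntil u hu, fun h => hW (W.edges_dropUntil_subset_edges hu h)⟩
  have hzy' : (T.deleteEdges {s(x, u)}).Reachable z y :=
    reachable_deleteEdges_iff_exists_walk.2 ⟨W, fun h => hu (W.snd_mem_support_of_mem_edges h)⟩
  have hyu : (T.deleteEdges {s(x, u)}).Adj u y := by
    simp [hy.symm, hxy.symm, hy.ne]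
  exact hyu.reachable.trans (hzy'.symm.trans hzx)

theorem ne_of_mem_branchEdges (hT : T.IsAcyclic) {x u : V} (hxu : T.Adj x u) {e : V × V}
    (he : e ∈ branchEdges T x u) : e.1 ≠ u ∧ e.2 ≠ u := by
  obtain ⟨-, h₁, h₂⟩ := mem_filter.1 he
  exact ⟨fun h => notMem_branch hT hxu (h ▸ h₁), fun h => notMem_branch hT hxu (h ▸ h₂)⟩

theorem disjoint_insert_branchEdges (hT : T.IsAcyclic) {u x y : V} (hx : T.Adj x u)
    (hy : T.Adj y u) (hxy : x ≠ y) :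
    Disjoint (insert (x, u) (branchEdges T x u)) (insert (y, u) (branchEdges T y u)) := by
  have fst_mem : ∀ {z : V} {e : V × V}, e ∈ insert (z, u) (branchEdges T z u) →
      e.1 ∈ branch T z u := by
    intro z e he
    rcases mem_insert.1 he with rfl | he
    · exact mem_branch_self _ _
    · exact (mem_filter.1 he).2.1
  exact disjoint_left.2 fun e hex hey =>
    disjoint_left.1 (disjoint_branch hT hx hy hxy) (fst_mem hex) (fst_mem hey)

theorem reaches_inter_branchEdges_iff {x u : V} {L : Finset (V × V)}
    (hL : L ⊆ treeEdges T \ {(u, x), (x, u)}) (S : Finset V) :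
    Reaches (L ∩ branchEdges T x u) S x ↔ Reaches L S x := by
  refine ⟨fun ⟨s, hs, h⟩ => ⟨s, hs, ReflTransGen.mono (fun a b h => (mem_inter.1 h).1) _ _ h⟩,
    fun ⟨s, hs, h⟩ => ⟨s, hs, ?_⟩⟩
  have hr : ∀ a b, (a, b) ∈ L → (T.deleteEdges {s(x, u)}).Adj a b := by
    intro a b hab
    obtain ⟨hadj, hne⟩ := mem_sdiff.1 (hL hab)
    refine (deleteEdges_adj ..).2 ⟨mem_treeEdges.1 hadj, ?_⟩
    simp only [mem_insert, mem_singleton, Prod.mk.injEq, not_or] at hne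
    simp only [Set.mem_singleton_iff, Sym2.eq_iff]
    tauto
  exact ReflTransGen.mono (fun a b h => mem_inter.2 h) _ _
    (reflTransGen_and_mem_branchEdges hr h (mem_branch_self x u))

theorem apSub_eq_ap_branchEdges (hT : T.IsAcyclic) (q : V × V → ℝ) (S : Finset V) {x u : V}
    (hxu : T.Adj x u) : apSub (treeEdges T) q S x u = ap (branchEdges T x u) q S x := by
  have hsub : branchEdges T x u ⊆ treeEdges T \ {(u, x), (x, u)} := fun e he => by
    have := ne_of_mem_branchEdges hT hxu he
    refine mem_sdiff.2 ⟨(mem_filter.1 he).1, ?_⟩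
    simp only [mem_insert, mem_singleton]
    rintro (rfl | rfl) <;> simp_all
  rw [apSub, ap, ap, ← sum_edgeWeight_mul_inter q hsub]
  refine sum_congr rfl fun L hL => ?_
  rw [reaches_inter_branchEdges_iff (mem_powerset.1 hL)]

theorem apSub_congr (hT : T.IsAcyclic) {x u : V} (hxu : T.Adj x u) {q q' : V × V → ℝ}
    (h : ∀ a b, a ≠ u → b ≠ u → q (a, b) = q' (a, b)) (S : Finset V) :
    apSub (treeEdges T) q S x u = apSub (treeEdges T) q' S x u := by
  rw [apSub_eq_ap_branchEdges hT q S hxu, apSub_eq_ap_branchEdges hT q' S hxu]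
  exact ap_congr (fun e he => h _ _ (ne_of_mem_branchEdges hT hxu he).1
    (ne_of_mem_branchEdges hT hxu he).2) S x

/-- Cut a path from a seed to `u` at its first visit of `u`. -/
theorem reaches_iff_exists_neighbor {L : Finset (V × V)} (hL : L ⊆ treeEdges T) {S : Finset V}
    {u : V} (hu : u ∉ S) :
    Reaches L S u ↔
      ∃ x ∈ T.neighborFinset u, (x, u) ∈ L ∧ Reaches (L ∩ branchEdges T x u) S x := by
  refine ⟨fun ⟨s, hs, h⟩ => ?_, fun ⟨x, _, hxu, s, hs, h⟩ =>
    ⟨s, hs, (ReflTransGen.mono (fun a b h => (mem_inter.1 h).1) _ _ h).tail hxu⟩⟩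
  obtain ⟨x, hsx, hxu⟩ := h.exists_avoiding_of_ne (fun h => hu (h ▸ hs))
  have hr : ∀ a b, (a, b) ∈ L ∧ a ≠ u ∧ b ≠ u → (T.deleteEdges {s(x, u)}).Adj a b := by
    rintro a b ⟨hab, ha, hb⟩
    refine (deleteEdges_adj ..).2 ⟨mem_treeEdges.1 (hL hab), ?_⟩
    simp [ha, hb]
  refine ⟨x, (mem_neighborFinset ..).2 (mem_treeEdges.1 (hL hxu)).symm, hxu, s, hs,
    ReflTransGen.mono ?_ _ _ (reflTransGen_and_mem_branchEdges hr hsx (mem_branch_self x u))⟩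
  exact fun a b h => mem_inter.2 ⟨h.1.1, h.2⟩

end Branch

section Factorization

open SimpleGraph

variable [Fintype V] [DecidableEq V] {T : SimpleGraph V} [DecidableRel T.Adj]

theorem one_sub_ap_eq_prod (hT : T.IsAcyclic) (q : V × V → ℝ) {S : Finset V} {u : V}
    (hu : u ∉ S) :
    1 - ap (treeEdges T) q S u =
      ∏ x ∈ T.neighborFinset u, (1 - apSub (treeEdges T) q S x u * q (x, u)) := by
  set D : V → Finset (V × V) := fun x => insert (x, u) (branchEdges T x u)
  set fails : V → Finset (V × V) → ℝ := fun x L =>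
    1 - (if (x, u) ∈ L then 1 else 0) * if Reaches (L ∩ branchEdges T x u) S x then 1 else 0
  have hadj : ∀ x ∈ T.neighborFinset u, T.Adj x u := fun x hx =>
    ((mem_neighborFinset ..).1 hx).symm
  have hfails : ∀ L ⊆ treeEdges T,
      (1 - if Reaches L S u then 1 else 0) = ∏ x ∈ T.neighborFinset u, fails x (L ∩ D x) := by
    intro L hL
    have hD : ∀ x, fails x (L ∩ D x) = fails x L := fun x => by
      simp only [fails, D, inter_assoc, inter_eq_right.2 (subset_insert _ _), mem_inter,
        mem_insert_self, and_true]
    simp only [hD, reaches_iff_exists_neighbor hL hu]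
    split_ifs with h
    · obtain ⟨x, hx, hxu, hreach⟩ := h
      rw [sub_self, eq_comm]
      exact prod_eq_zero hx (by simp [fails, hxu, hreach])
    · push Not at h
      rw [sub_zero, eq_comm]
      refine prod_eq_one fun x hx => ?_
      by_cases hxu : (x, u) ∈ L <;> simp [fails, hxu, h x hx]
  have hblock : ∀ x ∈ T.neighborFinset u,
      ∑ L ∈ (D x).powerset, edgeWeight (D x) q L * fails x L =
        1 - apSub (treeEdges T) q S x u * q (x, u) := by
    intro x hx
    have hnot : (x, u) ∉ branchEdges T x u := fun h =>
      (ne_of_mem_branchEdges hT (hadj x hx) h).2 rfl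
    simp only [D, fails, mul_sub, mul_one, sum_sub_distrib, sum_edgeWeight]
    rw [sum_edgeWeight_insert_mul q hnot fun L => if Reaches L S x then 1 else 0,
      apSub_eq_ap_branchEdges hT q S (hadj x hx), ap, mul_comm]
  calc 1 - ap (treeEdges T) q S u
      = ∑ L ∈ (treeEdges T).powerset,
          edgeWeight (treeEdges T) q L * (1 - if Reaches L S u then 1 else 0) := by
        simp only [ap, mul_sub, mul_one, sum_sub_distrib, sum_edgeWeight]
    _ = ∑ L ∈ (treeEdges T).powerset,
          edgeWeight (treeEdges T) q L * ∏ x ∈ T.neighborFinset u, fails x (L ∩ D x) :=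
        sum_congr rfl fun L hL => by rw [hfails L (mem_powerset.1 hL)]
    _ = ∏ x ∈ T.neighborFinset u, ∑ L ∈ (D x).powerset, edgeWeight (D x) q L * fails x L := by
        refine sum_edgeWeight_mul_prod q D fails _ ?_ ?_
        · exact fun x hx y hy hxy => disjoint_insert_branchEdges hT (hadj x hx) (hadj y hy) hxy
        · intro x hx e he
          rcases mem_insert.1 he with rfl | he
          · exact mem_treeEdges.2 (hadj x hx)
          · exact (mem_filter.1 he).1
    _ = _ := prod_congr rfl hblock

theorem one_sub_apSub_eq_prod (hT : T.IsAcyclic) (q : V × V → ℝ) {S : Finset V} {u : V}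
    (hu : u ∉ S) (v : V) :
    1 - apSub (treeEdges T) q S u v =
      ∏ x ∈ (T.neighborFinset u).erase v, (1 - apSub (treeEdges T) q S x u * q (x, u)) := by
  set R : Finset (V × V) := {(v, u), (u, v)}
  set q' : V × V → ℝ := fun e => if e ∈ R then 0 else q e
  have hq' : q' (v, u) = 0 := if_pos (mem_insert_self _ _)
  rw [apSub, ap_sdiff, one_sub_ap_eq_prod hT q' hu,
    ← prod_erase _ (by rw [hq', mul_zero, sub_zero])]
  refine prod_congr rfl fun x hx => ?_
  obtain ⟨hxv, hx⟩ := mem_erase.1 hx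
  have hxu : T.Adj x u := ((mem_neighborFinset ..).1 hx).symm
  have hq'x : q' (x, u) = q (x, u) := if_neg (by simp [R, hxv, hxu.ne])
  rw [hq'x, apSub_congr hT hxu (fun a b ha hb => if_neg (by simp [R, ha, hb])) S]

end Factorization

theorem prod_erase_two_eq_div_general [Fintype V] [DecidableEq V]
    (T : SimpleGraph V) [DecidableRel T.Adj] (hT : T.IsTree)
    (p p' : V × V → ℝ)
    (S B : Finset V)
    (hlt : ∀ x, x ∉ S → ap (treeEdges T) (pB p p' B) S x < 1)
    (u : V) (hu : u ∉ S) (v w : V) (hw : T.Adj u w)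
    (hvw : v ≠ w) :
    ∏ x ∈ ((T.neighborFinset u).erase v).erase w,
        (1 - apSub (treeEdges T) (pB p p' B) S x u * pB p p' B (x, u)) =
      (1 - apSub (treeEdges T) (pB p p' B) S u v) /
        (1 - apSub (treeEdges T) (pB p p' B) S w u * pB p p' B (w, u)) := by
  have hwN : w ∈ T.neighborFinset u := (T.mem_neighborFinset u w).2 hw
  have hfactor : 1 - apSub (treeEdges T) (pB p p' B) S w u * pB p p' B (w, u) ≠ 0 := by
    have hne : 1 - ap (treeEdges T) (pB p p' B) S u ≠ 0 := (sub_pos.2 (hlt u hu)).ne'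
    rw [one_sub_ap_eq_prod hT.isAcyclic _ hu] at hne
    exact prod_ne_zero_iff.1 hne w hwN
  rw [one_sub_apSub_eq_prod hT.isAcyclic _ hu v,
    ← mul_prod_erase _ _ (mem_erase.2 ⟨hvw.symm, hwN⟩), mul_div_cancel_left₀ _ hfactor]

/-- On a bidirected tree where every non-seed node is activated with probability
strictly less than one, for every non-seed node `u` and two distinct neighbors
`v, w` of `u`:
`∏_{x ∈ N(u)\{v,w}} (1 − ap_B(x\u)·p^B_{xu})
  = (1 − ap_B(u\v)) / (1 − ap_B(w\u)·p^B_{wu})`. -/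
theorem prod_erase_two_eq_div [Fintype V] [DecidableEq V]
    (T : SimpleGraph V) [DecidableRel T.Adj] (hT : T.IsTree)
    (p p' : V × V → ℝ)
    (hp0 : ∀ e, 0 ≤ p e) (hpp' : ∀ e, p e ≤ p' e) (hp'1 : ∀ e, p' e ≤ 1)
    (S B : Finset V)
    (hlt : ∀ x, x ∉ S → ap (treeEdges T) (pB p p' B) S x < 1)
    (u : V) (hu : u ∉ S) (v w : V) (hv : T.Adj u v) (hw : T.Adj u w)
    (hvw : v ≠ w) :
    ∏ x ∈ ((T.neighborFinset u).erase v).erase w,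
        (1 - apSub (treeEdges T) (pB p p' B) S x u * pB p p' B (x, u)) =
      (1 - apSub (treeEdges T) (pB p p' B) S u v) /
        (1 - apSub (treeEdges T) (pB p p' B) S w u * pB p p' B (w, u)) :=
  prod_erase_two_eq_div_general T hT p p' S B hlt u hu v w hw hvw

end
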